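/- arXiv:1212.1917 — 3 statements merged into one kernel-verified Lean document; each statement's English description precedes it below -/
import Mathlib

section
/- Let X ⊴ G be finite groups with X perfect, F an algebraically closed field, and V an irreducible projective representation of X that is G-stable. If W and W' are two projective representations of G both extending V (i.e., restricting to V on X), then W and W' are proportional: there exists β : G → F^× with W'(g) = β(g)·W(g) for all g ∈ G. In particular, the extension of V to G, when it exists, is unique up to equivalence. -/
/-- Let `X ⊴ G` be finite groups with `X` perfect, `F` algebraically closed,
`V` a `G`-stable irreducible normalized projective representation of `X`. Any two projective
representations of `G` extending `V` are proportional (hence equivalent). -/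
theorem extension_unique {F : Type*} [Field F] [IsAlgClosed F]
    {G : Type*} [Group G] [Finite G]
    (X : Subgroup G) (hN : X.Normal) (hperf : commutator ↥X = ⊤) {n : ℕ}
    (V : ↥X → Matrix (Fin n) (Fin n) F)
    (hV1 : V 1 = 1) (hVu : ∀ x, IsUnit (V x))
    (hVcoc : ∀ x x', ∃ c : Fˣ, V x * V x' = (c : F) • V (x * x'))
    (hVirr : ∀ U : Submodule F (Fin n → F),
      (∀ x, U.map (V x).mulVecLin ≤ U) → U = ⊥ ∨ U = ⊤)
    (hstab : ∀ g : G, ∃ J : (Matrix (Fin n) (Fin n) F)ˣ, ∀ x : ↥X, ∃ c : Fˣ,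
      (J : Matrix (Fin n) (Fin n) F) * V ⟨g * ↑x * g⁻¹, hN.conj_mem ↑x x.2 g⟩ *
        ((J⁻¹ : (Matrix (Fin n) (Fin n) F)ˣ) : Matrix (Fin n) (Fin n) F) = (c : F) • V x)
    (W W' : G → Matrix (Fin n) (Fin n) F)
    (hW1 : W 1 = 1) (hWu : ∀ g, IsUnit (W g))
    (hWcoc : ∀ g g', ∃ c : Fˣ, W g * W g' = (c : F) • W (g * g'))
    (hWext : ∀ x : ↥X, W ↑x = V x)
    (hW'1 : W' 1 = 1) (hW'u : ∀ g, IsUnit (W' g))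
    (hW'coc : ∀ g g', ∃ c : Fˣ, W' g * W' g' = (c : F) • W' (g * g'))
    (hW'ext : ∀ x : ↥X, W' ↑x = V x) :
    ∃ β : G → Fˣ, ∀ g, W' g = (β g : F) • W g := by
  rcases Nat.eq_zero_or_pos n with hn | hn
  · subst hn
    refine ⟨fun _ => 1, fun g => ?_⟩
    ext i j
    exact i.elim0
  haveI : Nonempty (Fin n) := ⟨⟨0, hn⟩⟩
  -- scalar cancellation
  have hcancel : ∀ {a b : Fˣ} {M : Matrix (Fin n) (Fin n) F}, M ≠ 0 →
      (a : F) • M = (b : F) • M → a = b := by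
    intro a b M hM h
    have : ((a : F) - b) • M = 0 := by rw [sub_smul, h, sub_self]
    rcases smul_eq_zero.mp this with h' | h'
    · exact Units.ext (sub_eq_zero.mp h')
    · exact absurd h' hM
  -- conjugation property for any extension of V
  have key : ∀ (U : G → Matrix (Fin n) (Fin n) F),
      (∀ g g', ∃ c : Fˣ, U g * U g' = (c : F) • U (g * g')) →
      (∀ x : ↥X, U ↑x = V x) →
      ∀ (g : G) (x : ↥X), ∃ c : Fˣ,
        U g * V x = (c : F) • (V ⟨g * ↑x * g⁻¹, hN.conj_mem ↑x x.2 g⟩ * U g) := by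
    intro U hUcoc hUext g x
    obtain ⟨c₁, hc₁⟩ := hUcoc g ↑x
    obtain ⟨c₂, hc₂⟩ := hUcoc (g * ↑x * g⁻¹) g
    set y : ↥X := ⟨g * ↑x * g⁻¹, hN.conj_mem ↑x x.2 g⟩ with hy
    have h1 : g * ↑x * g⁻¹ * g = g * ↑x := by group
    rw [h1] at hc₂
    have hUy : U (g * ↑x * g⁻¹) = V y := hUext y
    rw [hUy] at hc₂
    refine ⟨c₁ * c₂⁻¹, ?_⟩
    have h2 : U (g * ↑x) = ((c₂⁻¹ : Fˣ) : F) • (V y * U g) := by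
      rw [hc₂, smul_smul]
      norm_num
    rw [← hUext x, hc₁, h2, smul_smul]
    norm_num
  -- main pointwise statement
  have main : ∀ g : G, ∃ β : Fˣ, W' g = (β : F) • W g := by
    intro g
    obtain ⟨a, ha⟩ := hWu g
    set T : Matrix (Fin n) (Fin n) F := (↑a⁻¹ : Matrix (Fin n) (Fin n) F) * W' g with hT
    have hTu : IsUnit T := (a⁻¹ : (Matrix (Fin n) (Fin n) F)ˣ).isUnit.mul (hW'u g)
    have hTne : T ≠ 0 := hTu.ne_zero
    have hWT : W g * T = W' g := by
      rw [hT, ← ha, ← mul_assoc, a.mul_inv, one_mul]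
    -- T commutes with V up to scalars
    have hTcomm : ∀ x : ↥X, ∃ c : Fˣ, T * V x = (c : F) • (V x * T) := by
      intro x
      obtain ⟨c, hc⟩ := key W hWcoc hWext g x
      obtain ⟨c', hc'⟩ := key W' hW'coc hW'ext g x
      set y : ↥X := ⟨g * ↑x * g⁻¹, hN.conj_mem ↑x x.2 g⟩ with hy
      refine ⟨c' * c⁻¹, ?_⟩
      apply smul_right_injective (Matrix (Fin n) (Fin n) F) (c.ne_zero)
      have e1 : (c : F) • (V y * (W g * T)) = W g * (V x * T) := by
        rw [← mul_assoc, ← smul_mul_assoc, ← hc, mul_assoc]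
      calc (c : F) • (T * V x)
          = (c : F) • ((↑a⁻¹ : Matrix (Fin n) (Fin n) F) * (W' g * V x)) := by
            rw [hT, mul_assoc]
        _ = (c : F) • ((↑a⁻¹ : Matrix (Fin n) (Fin n) F) * ((c' : F) • (V y * W' g))) := by
            rw [hc']
        _ = (c' : F) • ((c : F) • ((↑a⁻¹ : Matrix (Fin n) (Fin n) F) * (V y * (W g * T)))) := by
            rw [hWT, mul_smul_comm, smul_comm]
        _ = (c' : F) • ((↑a⁻¹ : Matrix (Fin n) (Fin n) F) * (W g * (V x * T))) := by
            rw [← mul_smul_comm, e1]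
        _ = (c' : F) • (V x * T) := by
            rw [← ha, ← mul_assoc, a.inv_mul, one_mul]
        _ = (c : F) • ((↑(c' * c⁻¹) : F) • (V x * T)) := by
            rw [smul_smul]
            congr 1
            rw [Units.val_mul, Units.val_inv_eq_inv_val]
            field_simp
    choose μ hμ using hTcomm
    -- μ is a homomorphism into Fˣ
    have hμ1 : μ 1 = 1 := by
      have h := hμ 1
      rw [hV1, mul_one, one_mul] at h
      exact (hcancel hTne (by rw [← h, Units.val_one, one_smul])).symm
    have hμmul : ∀ x x', μ (x * x') = μ x * μ x' := by
      intro x x'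
      obtain ⟨d, hd⟩ := hVcoc x x'
      have hM : V (x * x') * T ≠ 0 := ((hVu _).mul hTu).ne_zero
      apply hcancel hM
      rw [← hμ (x * x')]
      have hd' : V (x * x') = ((d⁻¹ : Fˣ) : F) • (V x * V x') := by
        rw [hd, smul_smul]
        norm_num
      have e1 : T * (V x * V x') = ((μ x : F) * (μ x' : F)) • (V x * (V x' * T)) := by
        rw [← mul_assoc, hμ x, smul_mul_assoc, mul_assoc, hμ x', mul_smul_comm, smul_smul]
      calc T * V (x * x')
          = ((d⁻¹ : Fˣ) : F) • (T * (V x * V x')) := by rw [hd', mul_smul_comm]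
        _ = ((μ x : F) * (μ x' : F)) • (((d⁻¹ : Fˣ) : F) • (V x * (V x' * T))) := by
            rw [e1, smul_comm]
        _ = ((μ x : F) * (μ x' : F)) • (V (x * x') * T) := by
            rw [← mul_assoc, hd, smul_mul_assoc, smul_smul, smul_smul]
            congr 1
            rw [Units.val_inv_eq_inv_val]
            field_simp
        _ = (↑(μ x * μ x') : F) • (V (x * x') * T) := by rw [Units.val_mul]
    let μhom : ↥X →* Fˣ := { toFun := μ, map_one' := hμ1, map_mul' := hμmul }
    have htriv : ∀ x : ↥X, μ x = 1 := by
      intro x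
      have hx : x ∈ commutator ↥X := hperf ▸ Subgroup.mem_top x
      exact Abelianization.commutator_subset_ker μhom hx
    have hcommT : ∀ x : ↥X, T * V x = V x * T := by
      intro x
      rw [hμ x, htriv x, Units.val_one, one_smul]
    -- Schur's lemma
    obtain ⟨lam, hlam⟩ := Module.End.exists_eigenvalue (Matrix.mulVecLin T)
    set U := Module.End.eigenspace (Matrix.mulVecLin T) lam with hU
    have hstable : ∀ x, U.map (V x).mulVecLin ≤ U := by
      intro x w hw
      obtain ⟨v, hv, rfl⟩ := Submodule.mem_map.mp hw
      rw [hU, Module.End.mem_eigenspace_iff] at hv ⊢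
      simp only [Matrix.mulVecLin_apply] at hv ⊢
      rw [Matrix.mulVec_mulVec, hcommT x, ← Matrix.mulVec_mulVec, hv, Matrix.mulVec_smul]
    rcases hVirr U hstable with hbot | htop
    · exact absurd hbot hlam
    · have hvall : ∀ v, T.mulVec v = lam • v := by
        intro v
        have hmem : v ∈ U := htop ▸ Submodule.mem_top
        rw [hU, Module.End.mem_eigenspace_iff] at hmem
        simpa using hmem
      have hTeq : T = lam • (1 : Matrix (Fin n) (Fin n) F) := by
        ext i j
        classical
        have h := congrFun (hvall (Pi.single j 1)) i
        rw [Matrix.mulVec_single_one] at h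
        simpa [Matrix.transpose_apply, Matrix.one_apply, Pi.single_apply, mul_comm,
          eq_comm] using h
      have hlam0 : lam ≠ 0 := by
        intro h
        apply hTne
        rw [hTeq, h, zero_smul]
      refine ⟨Units.mk0 lam hlam0, ?_⟩
      rw [← hWT, hTeq, mul_smul_comm, mul_one]
      simp
  choose β hβ using main
  exact ⟨β, hβ⟩
end

section
/- Let X ⊴ G be finite groups with X perfect, F an algebraically closed field of characteristic q ≥ 0, and let Ṽ be a projective representation of G whose restriction to X is an irreducible projective representation V whose cocycle has finite order in Z²(X,F^×). Assume H²(G,F^×) is finite. Then there exists a function β : G → F^× with β identically 1 on X such that the projective representation β·Ṽ extends V and has cocycle of finite order in Z²(G,F^×). -/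
/-!
Since `H²(G, Fˣ)` is finite, some power `α ^ M` of the cocycle is a coboundary `∂γ`. On `X` the
cocycle has order dividing `N₀`, so `δ = γ ^ N₀` satisfies `∂δ = α ^ (M N₀)` and is a homomorphism
on `X`, hence trivial there because `X` is perfect. Any `(M N₀)`-th root `β` of `δ⁻¹` that is `1`
where `δ` is `1` then gives `(∂β · α) ^ (M N₀) = ∂δ⁻¹ · ∂δ = 1`.
-/

/-- The subgroup of 2-cocycles of `G` with values in `Fˣ` (trivial action), inside the
group of all functions `G × G → Fˣ`. -/
def twoCocycles (G : Type*) [Group G] (F : Type*) [Field F] : Subgroup (G × G → Fˣ) where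
  carrier := {α | ∀ g₁ g₂ g₃ : G,
    α (g₁, g₂) * α (g₁ * g₂, g₃) = α (g₂, g₃) * α (g₁, g₂ * g₃)}
  one_mem' := by intro g₁ g₂ g₃; simp
  mul_mem' := by
    intro a b ha hb g₁ g₂ g₃
    simp only [Pi.mul_apply]
    rw [mul_mul_mul_comm, ha, hb, mul_mul_mul_comm]
  inv_mem' := by
    intro a ha g₁ g₂ g₃
    simp only [Pi.inv_apply]
    rw [← mul_inv, ha g₁ g₂ g₃, mul_inv]

/-- The coboundary homomorphism `∂ : (G → Fˣ) →* (G × G → Fˣ)`. -/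
def twoCoboundary (G : Type*) [Group G] (F : Type*) [Field F] :
    (G → Fˣ) →* (G × G → Fˣ) where
  toFun f := fun p => f p.1 * f p.2 * (f (p.1 * p.2))⁻¹
  map_one' := by funext p; simp
  map_mul' := by
    intro f g
    funext p
    simp only [Pi.mul_apply, mul_inv]
    rw [mul_mul_mul_comm (f p.1) (g p.1), mul_mul_mul_comm (f p.1 * f p.2) (g p.1 * g p.2)]
/-- The second cohomology group `H²(G, Fˣ)` (trivial action), as the quotient of the
cocycles by the coboundaries. -/
def H2 (G : Type*) [Group G] (F : Type*) [Field F] :=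
  ↥(twoCocycles G F) ⧸ ((twoCoboundary G F).range.subgroupOf (twoCocycles G F))

instance H2.commGroup (G : Type*) [Group G] (F : Type*) [Field F] : CommGroup (H2 G F) :=
  inferInstanceAs (CommGroup (_ ⧸ _))

theorem Group.IsPerfect.monoidHom_eq_one {G A : Type*} [Group G] [CommGroup A]
    [Group.IsPerfect G] (φ : G →* A) : φ = 1 := by
  ext g
  exact Abelianization.commutator_subset_ker φ (Group.IsPerfect.mem_commutator (g := g))

theorem IsAlgClosed.exists_units_nthRoot (F : Type*) [Field F] [IsAlgClosed F] {K : ℕ}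
    (hK : 0 < K) : ∃ r : Fˣ → Fˣ, r 1 = 1 ∧ ∀ u, r u ^ K = u := by
  classical
  have hroot (u : Fˣ) : ∃ v : Fˣ, v ^ K = u := by
    obtain ⟨z, hz⟩ := IsAlgClosed.exists_pow_nat_eq (u : F) hK
    have hz0 : z ≠ 0 := by rintro rfl; exact u.ne_zero (by rw [← hz, zero_pow hK.ne'])
    exact ⟨Units.mk0 z hz0, Units.ext (by simp [hz])⟩
  choose r hr using hroot
  refine ⟨fun u => if u = 1 then 1 else r u, by simp, fun u => ?_⟩
  by_cases hu : u = 1 <;> simp [hu, hr]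

section Cohomology

variable {G : Type*} [Group G] {F : Type*} [Field F]

theorem mem_twoCocycles_of_mul_eq_smul {A : Type*} [Ring A] [Algebra F A]
    [Module.IsTorsionFree F A] (V : G → A) (α : G → G → Fˣ) (hV : ∀ g, V g ≠ 0)
    (hVα : ∀ g g', V g * V g' = (α g g' : F) • V (g * g')) :
    (fun p : G × G => α p.1 p.2) ∈ twoCocycles G F := by
  intro g₁ g₂ g₃
  have hassoc : ((α g₁ g₂ : F) * α (g₁ * g₂) g₃) • V (g₁ * g₂ * g₃)
      = ((α g₂ g₃ : F) * α g₁ (g₂ * g₃)) • V (g₁ * g₂ * g₃) := by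
    calc _ = V g₁ * V g₂ * V g₃ := by rw [hVα, smul_mul_assoc, hVα, smul_smul]
      _ = V g₁ * (V g₂ * V g₃) := mul_assoc _ _ _
      _ = _ := by rw [hVα g₂, mul_smul_comm, hVα, smul_smul, mul_assoc g₁]
  exact Units.ext (by simpa using smul_left_injective F (hV _) hassoc)

theorem exists_pow_mem_range_twoCoboundary [Finite (H2 G F)] {c : G × G → Fˣ}
    (hc : c ∈ twoCocycles G F) : ∃ M, 0 < M ∧ c ^ M ∈ (twoCoboundary G F).range := by
  let a : H2 G F := QuotientGroup.mk ⟨c, hc⟩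
  refine ⟨orderOf a, orderOf_pos a, ?_⟩
  have h : (QuotientGroup.mk (⟨c, hc⟩ ^ orderOf a) : H2 G F) = 1 := by
    rw [QuotientGroup.mk_pow]
    exact pow_orderOf_eq_one a
  rwa [QuotientGroup.eq_one_iff, Subgroup.mem_subgroupOf] at h

theorem eq_one_of_twoCoboundary_eq_one (X : Subgroup G) [Group.IsPerfect X] (δ : G → Fˣ)
    (hδ : ∀ x y : X, twoCoboundary G F δ (x, y) = 1) (x : X) : δ x = 1 := by
  let φ : X →* Fˣ := MonoidHom.mk' (fun x => δ x) fun x y => (mul_inv_eq_one.mp (hδ x y)).symm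
  exact DFunLike.congr_fun (Group.IsPerfect.monoidHom_eq_one φ) x

theorem twoCoboundary_mul_pow_eq_one {K : ℕ} {c : G × G → Fˣ} {δ β : G → Fˣ}
    (hδ : twoCoboundary G F δ = c ^ K) (hβ : β ^ K = δ⁻¹) :
    (twoCoboundary G F β * c) ^ K = 1 := by
  rw [mul_pow, ← map_pow, hβ, map_inv, hδ, inv_mul_cancel]

end Cohomology

theorem extension_with_finite_order_cocycle_general {F : Type*} [Field F] [IsAlgClosed F]
    {G : Type*} [Group G]
    (X : Subgroup G) (hperf : commutator ↥X = ⊤)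
    {n : ℕ} (hn : 0 < n)
    (Vt : G → Matrix (Fin n) (Fin n) F) (α : G → G → Fˣ)
    (hVu : ∀ g, IsUnit (Vt g))
    (hVcoc : ∀ g g', Vt g * Vt g' = (α g g' : F) • Vt (g * g'))
    (hfinX : ∃ N : ℕ, 0 < N ∧ ∀ x x' : ↥X, (α ↑x ↑x') ^ N = 1)
    (hH2 : Finite (H2 G F)) :
    ∃ β : G → Fˣ, (∀ x : ↥X, β ↑x = 1) ∧
      (∀ x : ↥X, (β ↑x : F) • Vt ↑x = Vt ↑x) ∧
      ∃ N : ℕ, 0 < N ∧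
        ∀ g g' : G, (β g * β g' * (β (g * g'))⁻¹ * α g g') ^ N = 1 := by
  have : Group.IsPerfect X := ⟨hperf⟩
  have : NeZero n := ⟨hn.ne'⟩
  obtain ⟨N₀, hN₀, hαX⟩ := hfinX
  set c : G × G → Fˣ := fun p => α p.1 p.2
  have hc : c ∈ twoCocycles G F :=
    mem_twoCocycles_of_mul_eq_smul Vt α (fun g => (hVu g).ne_zero) hVcoc
  obtain ⟨M, hM, γ, hγ⟩ := exists_pow_mem_range_twoCoboundary hc
  have hK : 0 < M * N₀ := Nat.mul_pos hM hN₀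
  set δ : G → Fˣ := γ ^ N₀
  have hδ : twoCoboundary G F δ = c ^ (M * N₀) := by rw [map_pow, hγ, pow_mul]
  have hδX : ∀ x : X, δ x = 1 := eq_one_of_twoCoboundary_eq_one X _ fun x y => by
    simp [hδ, c, pow_mul', hαX]
  obtain ⟨r, hr1, hr⟩ := IsAlgClosed.exists_units_nthRoot F hK
  refine ⟨fun g => r (δ g)⁻¹, fun x => by simp [hδX x, hr1], fun x => by simp [hδX x, hr1],
    M * N₀, hK, fun g g' => ?_⟩
  exact congrFun (twoCoboundary_mul_pow_eq_one hδ (funext fun g => hr _)) (g, g')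

/-- If `X ⊴ G`, `X` perfect, `Ṽ` a projective representation of `G` restricting
to an irreducible projective representation of `X` whose cocycle has finite order, and
`H²(G,Fˣ)` is finite, then there is `β : G → Fˣ`, identically `1` on `X`, such that `β • Ṽ`
extends the restriction and has cocycle of finite order in `Z²(G,Fˣ)`. -/
theorem extension_with_finite_order_cocycle {F : Type*} [Field F] [IsAlgClosed F]
    {G : Type*} [Group G] [Finite G]
    (X : Subgroup G) (hN : X.Normal) (hperf : commutator ↥X = ⊤)
    {n : ℕ} (hn : 0 < n)
    (Vt : G → Matrix (Fin n) (Fin n) F) (α : G → G → Fˣ)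
    (hVu : ∀ g, IsUnit (Vt g)) (hV1 : Vt 1 = 1)
    (hVcoc : ∀ g g', Vt g * Vt g' = (α g g' : F) • Vt (g * g'))
    (hirr : ∀ U : Submodule F (Fin n → F),
      (∀ x : ↥X, U.map (Vt ↑x).mulVecLin ≤ U) → U = ⊥ ∨ U = ⊤)
    (hfinX : ∃ N : ℕ, 0 < N ∧ ∀ x x' : ↥X, (α ↑x ↑x') ^ N = 1)
    (hH2 : Finite (H2 G F)) :
    ∃ β : G → Fˣ, (∀ x : ↥X, β ↑x = 1) ∧
      (∀ x : ↥X, (β ↑x : F) • Vt ↑x = Vt ↑x) ∧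
      ∃ N : ℕ, 0 < N ∧
        ∀ g g' : G, (β g * β g' * (β (g * g'))⁻¹ * α g g') ^ N = 1 :=
  extension_with_finite_order_cocycle_general X hperf hn Vt α hVu hVcoc hfinX hH2
end

section
/- Let G₁ and G₂ be finite groups and p a prime. A subgroup of G₁ × G₂ of the form Q₁ × Q₂ (with Qᵢ a p-subgroup of Gᵢ) is p-radical in G₁ × G₂ if and only if Q₁ is p-radical in G₁ and Q₂ is p-radical in G₂; moreover every p-radical subgroup of G₁ × G₂ is of this product form. -/
/-- `O_p(G)`: the largest normal `p`-subgroup of `G`. -/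
def pCore (p : ℕ) (G : Type*) [Group G] : Subgroup G :=
  sSup {H : Subgroup G | H.Normal ∧ IsPGroup p ↥H}

/-- A `p`-subgroup `Q` of `G` is `p`-radical if `O_p(N_G(Q)) = Q`. -/
def IsPRadicalSubgroup (p : ℕ) {G : Type*} [Group G] (Q : Subgroup G) : Prop :=
  IsPGroup p ↥Q ∧ pCore p ↥(Subgroup.normalizer (Q : Set G)) = Q.subgroupOf (Subgroup.normalizer (Q : Set G))

/-!
A `p`-subgroup `Q` is `p`-radical iff it contains every `p`-subgroup `W ≤ N(Q)` normalized by
`N(Q)`. Since `N(Q₁ × Q₂) = N(Q₁) × N(Q₂)`, the projections of such a `W` in `G₁ × G₂` are such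
subgroups for `Q₁` and `Q₂`, and conversely `W₁ × Q₂` is one for `Q₁ × Q₂` when `W₁` is one for
`Q₁`. If `Q ≤ G₁ × G₂` is `p`-radical, the product `S` of its projections is a `p`-group normalized
by `N(Q)`, so `N_S(Q) = S ∩ N(Q) ≤ Q`; as normalizers grow in the finite `p`-group `S`, `Q = S`.
-/

open Subgroup

section

variable {p : ℕ} {G G₁ G₂ : Type*} [Group G] [Group G₁] [Group G₂]

theorem Subgroup.normalizer_prod (H₁ : Subgroup G₁) (H₂ : Subgroup G₂) :
    normalizer (H₁.prod H₂ : Set (G₁ × G₂)) = (normalizer H₁).prod (normalizer H₂) := by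
  ext ⟨g₁, g₂⟩
  simp only [mem_normalizer_iff, mem_prod]
  refine ⟨fun h => ⟨fun x => by simpa using h (x, 1), fun y => by simpa using h (1, y)⟩, ?_⟩
  rintro ⟨h₁, h₂⟩ ⟨x, y⟩
  exact and_congr (h₁ x) (h₂ y)

theorem Subgroup.normalizer_le_normalizer_prod_map_fst_map_snd (H : Subgroup (G₁ × G₂)) :
    normalizer (H : Set (G₁ × G₂)) ≤
      normalizer ((H.map (MonoidHom.fst G₁ G₂)).prod (H.map (MonoidHom.snd G₁ G₂))) := by
  rw [normalizer_prod]
  exact le_prod_iff.mpr ⟨le_normalizer_map _, le_normalizer_map _⟩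

theorem isPGroup_prod_iff {H₁ : Subgroup G₁} {H₂ : Subgroup G₂} :
    IsPGroup p (H₁.prod H₂) ↔ IsPGroup p H₁ ∧ IsPGroup p H₂ := by
  refine ⟨fun h => ⟨fun g => ?_, fun g => ?_⟩, fun ⟨h₁, h₂⟩ g => ?_⟩
  · obtain ⟨k, hk⟩ := h ⟨(g, 1), g.2, one_mem _⟩
    exact ⟨k, Subtype.ext (congrArg (fun x : H₁.prod H₂ => (x : G₁ × G₂).1) hk)⟩
  · obtain ⟨k, hk⟩ := h ⟨(1, g), one_mem _, g.2⟩
    exact ⟨k, Subtype.ext (congrArg (fun x : H₁.prod H₂ => (x : G₁ × G₂).2) hk)⟩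
  · obtain ⟨m, hm⟩ := h₁ ⟨g.1.1, g.2.1⟩
    obtain ⟨n, hn⟩ := h₂ ⟨g.1.2, g.2.2⟩
    refine ⟨m + n, Subtype.ext (Prod.ext ?_ ?_)⟩
    · simpa [pow_add, pow_mul] using congrArg (fun x : H₁ => (x : G₁) ^ p ^ n) hm
    · simpa [pow_add, pow_mul'] using congrArg (fun x : H₂ => (x : G₂) ^ p ^ m) hn

theorem IsPGroup.eq_of_inf_normalizer_le [Fact p.Prime] [Finite G] {S Q : Subgroup G}
    (hS : IsPGroup p S) (hQS : Q ≤ S) (h : S ⊓ normalizer (Q : Set G) ≤ Q) : Q = S := by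
  have : Group.IsNilpotent S := hS.isNilpotent
  have hself : normalizer (Q.subgroupOf S : Set S) = Q.subgroupOf S := by
    rw [← subgroupOf_normalizer_eq hQS]
    exact le_antisymm (fun x hx => h ⟨x.2, hx⟩) fun x hx => le_normalizer hx
  have htop := normalizerCondition_iff_only_full_group_self_normalizing.mp
    Group.normalizerCondition_of_isNilpotent _ hself
  exact le_antisymm hQS (subgroupOf_eq_top.mp htop)

theorem isPRadicalSubgroup_iff {Q : Subgroup G} :
    IsPRadicalSubgroup p Q ↔ IsPGroup p Q ∧ ∀ W : Subgroup G, IsPGroup p W →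
      W ≤ normalizer (Q : Set G) → normalizer (Q : Set G) ≤ normalizer (W : Set G) → W ≤ Q := by
  set N := normalizer (Q : Set G)
  refine ⟨fun ⟨hQ, hcore⟩ => ⟨hQ, fun W hW hWN hNW => ?_⟩, fun ⟨hQ, hmax⟩ => ⟨hQ, ?_⟩⟩
  · have hnormal : (W.subgroupOf N).Normal := (normal_subgroupOf_iff_le_normalizer hWN).mpr hNW
    have hle : W.subgroupOf N ≤ Q.subgroupOf N := hcore ▸ le_sSup ⟨hnormal, hW.comap_subtype⟩
    exact fun w hw => hle (x := ⟨w, hWN hw⟩) hw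
  · refine le_antisymm (sSup_le ?_) (le_sSup ⟨normal_in_normalizer, hQ.comap_subtype⟩)
    rintro V ⟨hV, hVp⟩
    have hWN : V.map N.subtype ≤ N := map_subtype_le V
    have hNW : N ≤ normalizer (V.map N.subtype : Set G) := by
      rw [← normal_subgroupOf_iff_le_normalizer hWN, ← comap_subtype,
        comap_map_eq_self_of_injective N.subtype_injective]
      exact hV
    exact fun v hv => hmax _ (hVp.map _) hWN hNW ⟨v, hv, rfl⟩

namespace IsPRadicalSubgroup

variable {Q₁ : Subgroup G₁} {Q₂ : Subgroup G₂}

theorem prod (h₁ : IsPRadicalSubgroup p Q₁) (h₂ : IsPRadicalSubgroup p Q₂) :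
    IsPRadicalSubgroup p (Q₁.prod Q₂) := by
  obtain ⟨hQ₁, hmax₁⟩ := isPRadicalSubgroup_iff.mp h₁
  obtain ⟨hQ₂, hmax₂⟩ := isPRadicalSubgroup_iff.mp h₂
  refine isPRadicalSubgroup_iff.mpr ⟨isPGroup_prod_iff.mpr ⟨hQ₁, hQ₂⟩, fun W hW hWN hNW => ?_⟩
  rw [normalizer_prod] at hWN hNW
  obtain ⟨hWN₁, hWN₂⟩ := le_prod_iff.mp hWN
  refine le_prod_iff.mpr
    ⟨hmax₁ _ (hW.map _) hWN₁ fun g hg => ?_, hmax₂ _ (hW.map _) hWN₂ fun g hg => ?_⟩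
  · exact le_normalizer_map _ ⟨(g, 1), hNW ⟨hg, one_mem _⟩, rfl⟩
  · exact le_normalizer_map _ ⟨(1, g), hNW ⟨one_mem _, hg⟩, rfl⟩

theorem of_prod_left (h : IsPRadicalSubgroup p (Q₁.prod Q₂)) : IsPRadicalSubgroup p Q₁ := by
  obtain ⟨hQ, hmax⟩ := isPRadicalSubgroup_iff.mp h
  obtain ⟨hQ₁, hQ₂⟩ := isPGroup_prod_iff.mp hQ
  refine isPRadicalSubgroup_iff.mpr ⟨hQ₁, fun W hW hWN hNW w hw => ?_⟩
  have hle := hmax (W.prod Q₂) (isPGroup_prod_iff.mpr ⟨hW, hQ₂⟩)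
    (by rw [normalizer_prod]; exact prod_mono hWN le_normalizer)
    (by rw [normalizer_prod, normalizer_prod]; exact prod_mono hNW le_rfl)
  exact (hle (x := (w, 1)) ⟨hw, one_mem Q₂⟩).1

theorem of_prod_right (h : IsPRadicalSubgroup p (Q₁.prod Q₂)) : IsPRadicalSubgroup p Q₂ := by
  obtain ⟨hQ, hmax⟩ := isPRadicalSubgroup_iff.mp h
  obtain ⟨hQ₁, hQ₂⟩ := isPGroup_prod_iff.mp hQ
  refine isPRadicalSubgroup_iff.mpr ⟨hQ₂, fun W hW hWN hNW w hw => ?_⟩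
  have hle := hmax (Q₁.prod W) (isPGroup_prod_iff.mpr ⟨hQ₁, hW⟩)
    (by rw [normalizer_prod]; exact prod_mono le_normalizer hWN)
    (by rw [normalizer_prod, normalizer_prod]; exact prod_mono le_rfl hNW)
  exact (hle (x := (1, w)) ⟨one_mem Q₁, hw⟩).2

theorem eq_prod_map_fst_map_snd [Fact p.Prime] [Finite G₁] [Finite G₂]
    {Q : Subgroup (G₁ × G₂)} (h : IsPRadicalSubgroup p Q) :
    Q = (Q.map (MonoidHom.fst G₁ G₂)).prod (Q.map (MonoidHom.snd G₁ G₂)) := by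
  obtain ⟨hQ, hmax⟩ := isPRadicalSubgroup_iff.mp h
  set S := (Q.map (MonoidHom.fst G₁ G₂)).prod (Q.map (MonoidHom.snd G₁ G₂))
  set N := normalizer (Q : Set (G₁ × G₂))
  have hS : IsPGroup p S := isPGroup_prod_iff.mpr ⟨hQ.map _, hQ.map _⟩
  have hQS : Q ≤ S := le_prod_iff.mpr ⟨le_rfl, le_rfl⟩
  have hNS : N ≤ normalizer ((S ⊓ N :) : Set (G₁ × G₂)) :=
    (le_inf (normalizer_le_normalizer_prod_map_fst_map_snd Q) le_normalizer).trans
      inf_normalizer_le_normalizer_inf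
  exact hS.eq_of_inf_normalizer_le hQS (hmax _ hS.to_inf_left inf_le_right hNS)

end IsPRadicalSubgroup

end

theorem pRadical_prod_general {p : ℕ} (hp : p.Prime)
    {G₁ G₂ : Type*} [Group G₁] [Group G₂] [Finite G₁] [Finite G₂]
    (Q₁ : Subgroup G₁) (Q₂ : Subgroup G₂) :
    (IsPRadicalSubgroup p (Q₁.prod Q₂) ↔ IsPRadicalSubgroup p Q₁ ∧ IsPRadicalSubgroup p Q₂) ∧
    ∀ Q : Subgroup (G₁ × G₂), IsPRadicalSubgroup p Q →
      ∃ (R₁ : Subgroup G₁) (R₂ : Subgroup G₂), Q = R₁.prod R₂ := by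
  have : Fact p.Prime := ⟨hp⟩
  exact ⟨⟨fun h => ⟨h.of_prod_left, h.of_prod_right⟩, fun ⟨h₁, h₂⟩ => h₁.prod h₂⟩,
    fun Q hQ => ⟨_, _, hQ.eq_prod_map_fst_map_snd⟩⟩

/-- For finite groups `G₁, G₂` and a prime `p`: a product `Q₁ × Q₂` of
`p`-subgroups is `p`-radical in `G₁ × G₂` iff each `Qᵢ` is `p`-radical in `Gᵢ`; moreover
every `p`-radical subgroup of `G₁ × G₂` is of this product form. -/
theorem pRadical_prod {p : ℕ} (hp : p.Prime)
    {G₁ G₂ : Type*} [Group G₁] [Group G₂] [Finite G₁] [Finite G₂]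
    (Q₁ : Subgroup G₁) (Q₂ : Subgroup G₂)
    (h₁ : IsPGroup p ↥Q₁) (h₂ : IsPGroup p ↥Q₂) :
    (IsPRadicalSubgroup p (Q₁.prod Q₂) ↔ IsPRadicalSubgroup p Q₁ ∧ IsPRadicalSubgroup p Q₂) ∧
    ∀ Q : Subgroup (G₁ × G₂), IsPRadicalSubgroup p Q →
      ∃ (R₁ : Subgroup G₁) (R₂ : Subgroup G₂), Q = R₁.prod R₂ :=
  pRadical_prod_general hp Q₁ Q₂
end
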